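/- Let G=(V,E) be a finite multigraph with m>0. Let R_0=V, and for i=1,…,N let S_i⊆R_{i−1} be nonempty and η_i-peelable in R_{i−1}, with R_i=R_{i−1}∖S_i, and write R_*=R_N for the final residual. Then τ(G) ≤ 2·Σ_{i=1}^N η_i·π(S_i) + π(R_*). -/

import Mathlib

/-!
Peel the sets in order and colour each vertex by the signing of the first set that contains it,
leaving the final residual arbitrary. Charge every monochromatic edge to the first set `S k`
that contains one of its endpoints: it is then either inside `S k` and monochromatic for the
`k`-th signing, or it joins `S k` to `R k \ S k`; so the edges charged to `S k` number at most
`η k · vol(S k)`. The edges that are never charged lie inside the final residual, and there are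
at most `vol(R N) / 2` of them.
-/

open scoped Classical

noncomputable section

/-- Degree of a vertex in a finite multigraph given by endpoint maps (with multiplicity). -/
def mdeg {V E : Type} [Fintype E] [DecidableEq V] (fste snde : E → V) (v : V) : ℕ :=
  (Finset.univ.filter (fun e => fste e = v)).card +
    (Finset.univ.filter (fun e => snde e = v)).card

/-- Volume of a vertex set: `vol(S) = Σ_{v∈S} deg(v)`. -/
def mvol {V E : Type} [Fintype E] [DecidableEq V] (fste snde : E → V) (S : Finset V) : ℕ :=
  ∑ v ∈ S, mdeg fste snde v

/-- Number of edge copies internal to `S` that are monochromatic under the signing `x`. -/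
def monoIn {V E : Type} [Fintype E] [DecidableEq V]
    (fste snde : E → V) (S : Finset V) (x : V → Bool) : ℕ :=
  (Finset.univ.filter (fun e =>
    fste e ∈ S ∧ snde e ∈ S ∧ x (fste e) = x (snde e))).card

/-- Number of edge copies with one endpoint in `S` and the other in `R \ S`. -/
def bdry {V E : Type} [Fintype E] [DecidableEq V] (fste snde : E → V) (S R : Finset V) : ℕ :=
  (Finset.univ.filter (fun e =>
    (fste e ∈ S ∧ snde e ∈ R \ S) ∨ (snde e ∈ S ∧ fste e ∈ R \ S))).card

/-- `τ(G)`: the minimum, over two-colorings `χ : V → {±1}`, of the fraction of monochromatic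
edge copies. -/
def tauBip {V E : Type} [Fintype V] [Fintype E] [DecidableEq V] (fste snde : E → V) : ℝ :=
  ⨅ χ : V → Bool,
    ((Finset.univ.filter (fun e => χ (fste e) = χ (snde e))).card : ℝ) / (Fintype.card E : ℝ)

open Finset

section Volume

variable {V E : Type} [Fintype E] [DecidableEq V] (fste snde : E → V)

lemma mvol_eq_card_add_card (R : Finset V) :
    mvol fste snde R = #{e | fste e ∈ R} + #{e | snde e ∈ R} := by
  rw [mvol, ← sum_card_fiberwise_eq_card_filter, ← sum_card_fiberwise_eq_card_filter,
    ← sum_add_distrib]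
  rfl

lemma two_mul_card_edges_inside_le_mvol (R : Finset V) :
    2 * #{e | fste e ∈ R ∧ snde e ∈ R} ≤ mvol fste snde R := by
  rw [mvol_eq_card_add_card, two_mul]
  gcongr with e
  exacts [And.left, And.right]

lemma tauBip_le [Fintype V] (χ : V → Bool) :
    tauBip fste snde ≤ (#{e | χ (fste e) = χ (snde e)} : ℝ) / Fintype.card E :=
  ciInf_le ⟨0, by rintro _ ⟨χ', rfl⟩; positivity⟩ χ

end Volume

section Peeling

variable {V : Type} (S : ℕ → Finset V) (N : ℕ)

def peelLevel (v : V) : ℕ :=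
  Nat.find (⟨N, Or.inr rfl⟩ : ∃ i, v ∈ S i ∨ i = N)

variable {S N}

lemma peelLevel_le (v : V) : peelLevel S N v ≤ N :=
  Nat.find_min' _ (Or.inr rfl)

lemma peelLevel_le_of_mem {v : V} {i : ℕ} (hv : v ∈ S i) : peelLevel S N v ≤ i :=
  Nat.find_min' _ (Or.inl hv)

lemma mem_of_peelLevel_lt {v : V} (h : peelLevel S N v < N) : v ∈ S (peelLevel S N v) :=
  (Nat.find_spec (⟨N, Or.inr rfl⟩ : ∃ i, v ∈ S i ∨ i = N)).resolve_right h.ne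

lemma mem_iff_peelLevel_eq {v : V} {k : ℕ} (hkN : k < N) (hk : k ≤ peelLevel S N v) :
    v ∈ S k ↔ peelLevel S N v = k :=
  ⟨fun hv => (peelLevel_le_of_mem hv).antisymm hk,
    fun h => h ▸ mem_of_peelLevel_lt (h ▸ hkN)⟩

lemma mem_residual_iff_le_peelLevel [Fintype V] [DecidableEq V] {R : ℕ → Finset V}
    (hR0 : R 0 = univ) (hRstep : ∀ i < N, R (i + 1) = R i \ S i) {i : ℕ} (hi : i ≤ N) (v : V) :
    v ∈ R i ↔ i ≤ peelLevel S N v := by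
  induction i with
  | zero => simp [hR0]
  | succ i ih =>
    rw [hRstep i hi, mem_sdiff, ih (by omega)]
    by_cases hle : i ≤ peelLevel S N v
    · rw [mem_iff_peelLevel_eq hi hle]
      omega
    · simp only [hle, false_and, false_iff]
      omega

end Peeling

section Coloring

variable {V : Type} [Fintype V] [DecidableEq V] {S : ℕ → Finset V} {N : ℕ} {R : ℕ → Finset V}

def peelColoring (S : ℕ → Finset V) (N : ℕ) (x : ℕ → V → Bool) (v : V) : Bool :=
  x (peelLevel S N v) v

lemma mono_or_mem_sdiff_of_peelColoring_eq (hR0 : R 0 = univ)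
    (hRstep : ∀ i < N, R (i + 1) = R i \ S i) {x : ℕ → V → Bool} {u w : V} {k : ℕ}
    (hkN : k < N) (hu : peelLevel S N u = k) (hw : k ≤ peelLevel S N w)
    (hmono : peelColoring S N x u = peelColoring S N x w) :
    (u ∈ S k ∧ w ∈ S k ∧ x k u = x k w) ∨ (u ∈ S k ∧ w ∈ R k \ S k) := by
  have huS : u ∈ S k := (mem_iff_peelLevel_eq hkN hu.ge).2 hu
  by_cases hwS : w ∈ S k
  · have hw' := (mem_iff_peelLevel_eq hkN hw).1 hwS
    exact Or.inl ⟨huS, hwS, by simpa only [peelColoring, hu, hw'] using hmono⟩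
  · exact Or.inr ⟨huS, mem_sdiff.2 ⟨(mem_residual_iff_le_peelLevel hR0 hRstep hkN.le w).2 hw, hwS⟩⟩

variable {E : Type} [Fintype E] (fste snde : E → V)

lemma card_mono_peelColoring_le (hR0 : R 0 = univ)
    (hRstep : ∀ i < N, R (i + 1) = R i \ S i) (x : ℕ → V → Bool) :
    #{e | peelColoring S N x (fste e) = peelColoring S N x (snde e)} ≤
      ∑ k ∈ range N, (monoIn fste snde (S k) (x k) + bdry fste snde (S k) (R k)) +
        #{e | fste e ∈ R N ∧ snde e ∈ R N} := by
  calc _ ≤ #((range N).biUnion (fun k =>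
            ({e | fste e ∈ S k ∧ snde e ∈ S k ∧ x k (fste e) = x k (snde e)} : Finset E) ∪
            ({e | (fste e ∈ S k ∧ snde e ∈ R k \ S k) ∨ (snde e ∈ S k ∧ fste e ∈ R k \ S k)} :
              Finset E)) ∪
          ({e | fste e ∈ R N ∧ snde e ∈ R N} : Finset E)) := card_le_card ?_
    _ ≤ _ := (card_union_le _ _).trans <| Nat.add_le_add_right
          (card_biUnion_le.trans <| sum_le_sum fun k _ => card_union_le _ _) _
  intro e he
  simp only [mem_filter, mem_univ, true_and, mem_union, mem_biUnion, mem_range] at he ⊢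
  set a := peelLevel S N (fste e)
  set b := peelLevel S N (snde e)
  obtain hN | hkN := ((min_le_left a b).trans (peelLevel_le _)).eq_or_lt
  · have hres := mem_residual_iff_le_peelLevel hR0 hRstep le_rfl
    exact Or.inr ⟨(hres _).2 (by omega), (hres _).2 (by omega)⟩
  refine Or.inl ⟨min a b, hkN, ?_⟩
  rcases le_total a b with hab | hab
  · rw [min_eq_left hab] at hkN ⊢
    rcases mono_or_mem_sdiff_of_peelColoring_eq hR0 hRstep hkN rfl hab he with h | h
    exacts [Or.inl h, Or.inr (Or.inl h)]
  · rw [min_eq_right hab] at hkN ⊢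
    rcases mono_or_mem_sdiff_of_peelColoring_eq hR0 hRstep hkN rfl hab he.symm with
      ⟨hs, hf, hx⟩ | h
    exacts [Or.inl ⟨hf, hs, hx.symm⟩, Or.inr (Or.inr h)]

lemma card_mono_peelColoring_le_of_peelable (hR0 : R 0 = univ)
    (hRstep : ∀ i < N, R (i + 1) = R i \ S i) {η : ℕ → ℝ} {x : ℕ → V → Bool}
    (hx : ∀ i < N, 2 * (monoIn fste snde (S i) (x i) : ℝ) + bdry fste snde (S i) (R i) ≤
      η i * mvol fste snde (S i)) :
    (#{e | peelColoring S N x (fste e) = peelColoring S N x (snde e)} : ℝ) ≤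
      ∑ k ∈ range N, η k * mvol fste snde (S k) + mvol fste snde (R N) / 2 := by
  have hcount : (#{e | peelColoring S N x (fste e) = peelColoring S N x (snde e)} : ℝ) ≤
      ∑ k ∈ range N, (monoIn fste snde (S k) (x k) + bdry fste snde (S k) (R k) : ℝ) +
        #{e | fste e ∈ R N ∧ snde e ∈ R N} := by
    exact_mod_cast card_mono_peelColoring_le fste snde hR0 hRstep x
  have hinside : (2 * #{e | fste e ∈ R N ∧ snde e ∈ R N} : ℝ) ≤ mvol fste snde (R N) := by
    exact_mod_cast two_mul_card_edges_inside_le_mvol fste snde (R N)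
  have hstep : ∀ k ∈ range N, (monoIn fste snde (S k) (x k) + bdry fste snde (S k) (R k) : ℝ) ≤
      η k * mvol fste snde (S k) := fun k hk => by
    have := hx k (mem_range.1 hk)
    have : (0 : ℝ) ≤ monoIn fste snde (S k) (x k) := Nat.cast_nonneg _
    linarith
  linarith [sum_le_sum hstep]

end Coloring

theorem stmt9_general (V E : Type) [Fintype V] [Fintype E] [DecidableEq V]
    (fste snde : E → V)
    (N : ℕ) (S : ℕ → Finset V) (η : ℕ → ℝ) (Rres : ℕ → Finset V)
    (hR0 : Rres 0 = Finset.univ)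
    (hRstep : ∀ i < N, Rres (i + 1) = Rres i \ S i)
    (hpeel : ∀ i < N, ∃ x : V → Bool,
      (2 * (monoIn fste snde (S i) x : ℝ) + (bdry fste snde (S i) (Rres i) : ℝ))
        ≤ η i * (mvol fste snde (S i) : ℝ)) :
    tauBip fste snde ≤
      2 * (∑ i ∈ Finset.range N,
            η i * ((mvol fste snde (S i) : ℝ) / (2 * (Fintype.card E : ℝ))))
        + (mvol fste snde (Rres N) : ℝ) / (2 * (Fintype.card E : ℝ)) := by
  choose! x hx using hpeel
  calc tauBip fste snde
      ≤ #{e | peelColoring S N x (fste e) = peelColoring S N x (snde e)} / (Fintype.card E : ℝ) :=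
        tauBip_le fste snde _
    _ ≤ (∑ k ∈ range N, η k * mvol fste snde (S k) + mvol fste snde (Rres N) / 2) /
          (Fintype.card E : ℝ) := by
        gcongr
        exact card_mono_peelColoring_le_of_peelable fste snde hR0 hRstep hx
    _ = _ := by
        rw [mul_sum, add_div, sum_div]
        congr 1
        · exact sum_congr rfl fun i _ => by ring
        · ring

/-- Nonuniform volume peeling for bipartiteness: if disjoint sets `S i` are successively
`η i`-peelable in the residuals, then `τ(G) ≤ 2 Σ_i η_i π(S_i) + π(R_*)`. -/
theorem stmt9 (V E : Type) [Fintype V] [Fintype E] [DecidableEq V]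
    (fste snde : E → V) (hne : ∀ e, fste e ≠ snde e) (hm : 0 < Fintype.card E)
    (N : ℕ) (S : ℕ → Finset V) (η : ℕ → ℝ) (Rres : ℕ → Finset V)
    (hR0 : Rres 0 = Finset.univ)
    (hRstep : ∀ i < N, Rres (i + 1) = Rres i \ S i)
    (hSsub : ∀ i < N, S i ⊆ Rres i)
    (hSne : ∀ i < N, (S i).Nonempty)
    (hpeel : ∀ i < N, ∃ x : V → Bool,
      (2 * (monoIn fste snde (S i) x : ℝ) + (bdry fste snde (S i) (Rres i) : ℝ))
        ≤ η i * (mvol fste snde (S i) : ℝ)) :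
    tauBip fste snde ≤
      2 * (∑ i ∈ Finset.range N,
            η i * ((mvol fste snde (S i) : ℝ) / (2 * (Fintype.card E : ℝ))))
        + (mvol fste snde (Rres N) : ℝ) / (2 * (Fintype.card E : ℝ)) :=
  stmt9_general V E fste snde N S η Rres hR0 hRstep hpeel
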